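/- arXiv:1106.5463 — 2 statements merged into one kernel-verified Lean document; each statement's English description precedes it below -/
import Mathlib

section
/- Let D be a digraph obtained from a tournament by deleting the edges of two disjoint stars. If every missing edge of D has positive in-degree and positive out-degree in the dependency digraph Δ of D, then D has a vertex with the second neighborhood property. -/
variable {V : Type*}

/-- Out-neighborhood of `v`. -/
def Nplus (A : V → V → Prop) (v : V) : Set V := {u | A v u}

/-- In-neighborhood of `v`. -/
def Nminus (A : V → V → Prop) (v : V) : Set V := {u | A u v}

/-- Second out-neighborhood: vertices at directed distance exactly 2 from `v`. -/
def Npp (A : V → V → Prop) (v : V) : Set V :=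
  {u | u ≠ v ∧ ¬ A v u ∧ ∃ w, A v w ∧ A w u}

/-- The second neighborhood property. -/
def SNP (A : V → V → Prop) (v : V) : Prop := (Nplus A v).ncard ≤ (Npp A v).ncard

/-- A digraph (given by its arc relation) has no digons: no 2-cycles (this also rules out loops when stated for `u = v`). -/
def NoDigons (A : V → V → Prop) : Prop := ∀ u v, ¬ (A u v ∧ A v u)

/-- A tournament: an orientation of a complete graph. -/
def IsTournament (A : V → V → Prop) : Prop :=
  (∀ v, ¬ A v v) ∧ ∀ u v : V, u ≠ v → (A u v ↔ ¬ A v u)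

/-- `u v` is a missing edge: distinct and non-adjacent. -/
def MissingEdge (A : V → V → Prop) (u v : V) : Prop := u ≠ v ∧ ¬ A u v ∧ ¬ A v u

/-- `x₁y₁` loses to `x₂y₂` (with this labelling of endpoints). -/
def LosesAt (A : V → V → Prop) (x₁ y₁ x₂ y₂ : V) : Prop :=
  A x₁ x₂ ∧ ¬ A x₁ y₂ ∧ y₂ ∉ Npp A x₁ ∧ A y₁ y₂ ∧ ¬ A y₁ x₂ ∧ x₂ ∉ Npp A y₁

/-- The losing relation between (unordered) missing edges: the arcs of the dependency digraph. -/
def EdgeLoses (A : V → V → Prop) (e e' : Sym2 V) : Prop :=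
  ∃ x₁ y₁ x₂ y₂, e = s(x₁, y₁) ∧ e' = s(x₂, y₂) ∧
    MissingEdge A x₁ y₁ ∧ MissingEdge A x₂ y₂ ∧ LosesAt A x₁ y₁ x₂ y₂

/-!
Assume `x → y` and let `S` be the set of vertices other than `y` and the leaves of the two stars;
it induces a tournament. Positivity of the degrees in `Δ` forces the arcs between `S` and the rest:
a vertex of `S - x` beaten by `x` is also beaten by `y` and by every leaf, and any other vertex of
`S - x` beats `x`, `y` and every leaf. Give `x` the weight `1 + |V - S|` and every other vertex
weight `1`. The Havet–Thomassé median order argument, run with weights, gives a vertex `f` of `S`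
whose out-neighbours in `S` weigh at most as much as its second out-neighbours in `S`, and the
arcs above turn this into the SNP of `f` in `D`: for `f = x` because `N⁺(x) - S = {y}` while the
leaves of `x` lie in `N⁺⁺(x)`.
-/

open Finset

open scoped Classical

noncomputable section

namespace MedianOrder

variable (A : V → V → Prop) (w : V → ℕ)

def weightOn (p : V → Prop) (l : List V) : ℕ :=
  (l.map fun b => if p b then w b else 0).sum

/-- `∑ w a * w b` over the pairs of entries with `a` before `b` in `l` and `A a b`. -/
def forwardWeight : List V → ℕ
  | [] => 0
  | a :: l => w a * weightOn w (A a) l + forwardWeight l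

def crossWeight (l₁ l₂ : List V) : ℕ :=
  (l₁.map fun a => w a * weightOn w (A a) l₂).sum

def IsMedianOrder (l : List V) : Prop :=
  ∀ l', l'.Perm l → forwardWeight A w l' ≤ forwardWeight A w l

variable {A w}

@[simp]
lemma weightOn_nil (p : V → Prop) : weightOn w p [] = 0 := rfl

@[simp]
lemma weightOn_cons (p : V → Prop) (a : V) (l : List V) :
    weightOn w p (a :: l) = (if p a then w a else 0) + weightOn w p l := by
  simp [weightOn]

@[simp]
lemma weightOn_append (p : V → Prop) (l₁ l₂ : List V) :
    weightOn w p (l₁ ++ l₂) = weightOn w p l₁ + weightOn w p l₂ := by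
  simp [weightOn]

lemma weightOn_perm (p : V → Prop) {l₁ l₂ : List V} (h : l₁.Perm l₂) :
    weightOn w p l₁ = weightOn w p l₂ :=
  (h.map _).sum_eq

lemma weightOn_mono {p q : V → Prop} {l : List V} (h : ∀ u ∈ l, p u → q u) :
    weightOn w p l ≤ weightOn w q l := by
  refine List.sum_le_sum fun u hu => ?_
  by_cases hp : p u
  · simp [hp, h u hu hp]
  · simp [hp]

lemma weightOn_eq_sum_filter (p : V → Prop) {l : List V} (hl : l.Nodup) :
    weightOn w p l = ∑ u ∈ l.toFinset with p u, w u := by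
  rw [Finset.sum_filter, List.sum_toFinset _ hl, weightOn]

lemma crossWeight_perm_left {l₁ l₁' : List V} (h : l₁.Perm l₁') (l₂ : List V) :
    crossWeight A w l₁ l₂ = crossWeight A w l₁' l₂ :=
  (h.map _).sum_eq

lemma crossWeight_perm_right (l₁ : List V) {l₂ l₂' : List V} (h : l₂.Perm l₂') :
    crossWeight A w l₁ l₂ = crossWeight A w l₁ l₂' := by
  simp only [crossWeight, weightOn_perm _ h]

lemma crossWeight_append_left (l₁ l₂ l₃ : List V) :
    crossWeight A w (l₁ ++ l₂) l₃ = crossWeight A w l₁ l₃ + crossWeight A w l₂ l₃ := by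
  simp [crossWeight]

lemma forwardWeight_append (l₁ l₂ : List V) :
    forwardWeight A w (l₁ ++ l₂) =
      forwardWeight A w l₁ + forwardWeight A w l₂ + crossWeight A w l₁ l₂ := by
  induction l₁ with
  | nil => simp [forwardWeight, crossWeight]
  | cons a l₁ ih =>
    simp only [List.cons_append, forwardWeight, ih, weightOn_append, crossWeight,
      List.map_cons, List.sum_cons]
    ring

lemma forwardWeight_block_perm (p t : List V) {X Y : List V} (h : X.Perm Y) :
    forwardWeight A w (p ++ X ++ t) + forwardWeight A w Y =
      forwardWeight A w (p ++ Y ++ t) + forwardWeight A w X := by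
  simp only [forwardWeight_append, crossWeight_append_left, crossWeight_perm_right p h,
    crossWeight_perm_left h t]
  ring

lemma forwardWeight_singleton_append (c : V) (s : List V) :
    forwardWeight A w ([c] ++ s) = w c * weightOn w (A c) s + forwardWeight A w s := by
  simp [forwardWeight]

lemma crossWeight_singleton_right (s : List V) (c : V) :
    crossWeight A w s [c] = w c * weightOn w (A · c) s := by
  induction s with
  | nil => rfl
  | cons a s ih =>
    rw [crossWeight, List.map_cons, List.sum_cons, ← crossWeight, ih]
    by_cases hac : A a c <;> simp [hac]
    ring

lemma forwardWeight_append_singleton (s : List V) (c : V) :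
    forwardWeight A w (s ++ [c]) = forwardWeight A w s + w c * weightOn w (A · c) s := by
  simp [forwardWeight_append, crossWeight_singleton_right, forwardWeight]

lemma exists_isMedianOrder (l₀ : List V) : ∃ l, l.Perm l₀ ∧ IsMedianOrder A w l := by
  obtain ⟨l, hl, hmax⟩ := l₀.permutations.toFinset.exists_max_image (forwardWeight A w)
    ⟨l₀, by simp⟩
  have hl₀ : l.Perm l₀ := by simpa using hl
  exact ⟨l, hl₀, fun l' hl' => hmax l' (by simpa using hl'.trans hl₀)⟩

/-- The feedback property of median orders. -/
lemma IsMedianOrder.weightOn_out_le_in {p s t : List V} {c : V}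
    (h : IsMedianOrder A w (p ++ s ++ [c] ++ t)) (hc : 0 < w c) :
    weightOn w (A c) s ≤ weightOn w (A · c) s := by
  have hmove := h (p ++ ([c] ++ s) ++ t) (by
    simpa [List.append_assoc] using
      ((List.perm_append_comm (l₁ := [c]) (l₂ := s)).append_right t).append_left p)
  have hid := forwardWeight_block_perm (A := A) (w := w) p t
    (List.perm_append_comm (l₁ := [c]) (l₂ := s))
  rw [forwardWeight_singleton_append, forwardWeight_append_singleton,
    ← List.append_assoc p s [c]] at hid
  exact le_of_mul_le_mul_left (by linarith) hc

end MedianOrder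

section Tournament

open MedianOrder

variable {A : V → V → Prop}

def outNbrsIn (A : V → V → Prop) (S : Finset V) (f : V) : Finset V := {u ∈ S | A f u}

def secondOutNbrsIn (A : V → V → Prop) (S : Finset V) (f : V) : Finset V :=
  {u ∈ S | u ≠ f ∧ ¬ A f u ∧ ∃ v ∈ S, A f v ∧ A v u}

lemma adj_of_notMem_secondOutNbrsIn {S : Finset V}
    (htot : ∀ u ∈ S, ∀ v ∈ S, u ≠ v → A u v ∨ A v u) {f c g : V} (hc : c ∈ S) (hcf : c ≠ f)
    (hfc : ¬ A f c) (hc₂ : c ∉ secondOutNbrsIn A S f) (hg : g ∈ S) (hfg : A f g) : A c g := by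
  have hcg : c ≠ g := by rintro rfl; exact hfc hfg
  refine (htot c hc g hg hcg).resolve_right fun hgc => hc₂ ?_
  exact mem_filter.mpr ⟨hc, hcf, hfc, g, hg, hfg, hgc⟩

/-- Havet–Thomassé: split `l₂` at its first vertex `c` that is neither an out- nor a second
out-neighbour of `f`. Such a `c` beats every out-neighbour of `f`, so the feedback property at `c`
(at `f` if there is no such `c`) bounds the out-neighbours of `f` before `c` by second
out-neighbours. -/
theorem weightOn_out_le_weightOn_second (hA : NoDigons A) {S : Finset V}
    (htot : ∀ u ∈ S, ∀ v ∈ S, u ≠ v → A u v ∨ A v u) {w : V → ℕ} (hw : ∀ u ∈ S, 0 < w u)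
    {f : V} (hf : f ∈ S) (l₁ l₂ : List V) (hl₂ : ∀ u ∈ l₂, u ∈ S)
    (hmed : IsMedianOrder A w (l₁ ++ l₂ ++ [f])) :
    weightOn w (A f) l₂ ≤ weightOn w (· ∈ secondOutNbrsIn A S f) l₂ := by
  have hirr : ∀ u, ¬ A u u := fun u h => hA u u ⟨h, h⟩
  cases hfind : l₂.find? (fun u => u ≠ f ∧ ¬ A f u ∧ u ∉ secondOutNbrsIn A S f) with
  | none =>
    have hgood := List.find?_eq_none.mp hfind
    have hmed' : IsMedianOrder A w (l₁ ++ l₂ ++ [f] ++ []) := by simpa using hmed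
    refine (hmed'.weightOn_out_le_in (hw f hf)).trans (weightOn_mono fun u hu huf => ?_)
    have hfu : ¬ A f u := fun h => hA u f ⟨huf, h⟩
    have hne : u ≠ f := by rintro rfl; exact hirr u huf
    simpa [hne, hfu] using hgood u hu
  | some c =>
    obtain ⟨hc, s, t, rfl, hs⟩ := List.find?_eq_some_iff_append.mp hfind
    simp only [decide_eq_true_eq] at hc
    obtain ⟨hcf, hfc, hc₂⟩ := hc
    have hcS : c ∈ S := hl₂ c (by simp)
    have hmed' : IsMedianOrder A w (l₁ ++ s ++ [c] ++ (t ++ [f])) := by simpa using hmed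
    have hmedt : IsMedianOrder A w ((l₁ ++ s ++ [c]) ++ t ++ [f]) := by simpa using hmed
    have ih := weightOn_out_le_weightOn_second hA htot hw hf (l₁ ++ s ++ [c]) t
      (fun u hu => hl₂ u (by simp [hu])) hmedt
    have hbeats : weightOn w (A f) s ≤ weightOn w (A c) s := weightOn_mono fun u hu hfu =>
      adj_of_notMem_secondOutNbrsIn htot hcS hcf hfc hc₂ (hl₂ u (by simp [hu])) hfu
    have hin : weightOn w (A · c) s ≤ weightOn w (· ∈ secondOutNbrsIn A S f) s :=
      weightOn_mono fun u hu huc => by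
        have hne : u ≠ f := by rintro rfl; exact hfc huc
        have hfu : ¬ A f u := fun hfu => hA u c ⟨huc,
          adj_of_notMem_secondOutNbrsIn htot hcS hcf hfc hc₂ (hl₂ u (by simp [hu])) hfu⟩
        simpa [hne, hfu] using hs u hu
    have hout := hmed'.weightOn_out_le_in (hw c hcS)
    simp only [weightOn_append, weightOn_cons, if_neg hfc, if_neg hc₂]
    omega
termination_by l₂.length

theorem exists_weighted_feed_vertex (hA : NoDigons A) {S : Finset V} (hS : S.Nonempty)
    (htot : ∀ u ∈ S, ∀ v ∈ S, u ≠ v → A u v ∨ A v u) {w : V → ℕ} (hw : ∀ u ∈ S, 0 < w u) :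
    ∃ f ∈ S, ∑ u ∈ outNbrsIn A S f, w u ≤ ∑ u ∈ secondOutNbrsIn A S f, w u := by
  obtain ⟨l, hperm, hmed⟩ := exists_isMedianOrder (A := A) (w := w) S.toList
  have hmem : ∀ u, u ∈ l ↔ u ∈ S := by simp [hperm.mem_iff]
  obtain ⟨l', f, rfl⟩ : ∃ l' f, l = l' ++ [f] := by
    refine l.eq_nil_or_concat'.resolve_left ?_
    rintro rfl
    obtain ⟨u, hu⟩ := hS
    simpa using (hmem u).mpr hu
  have hnodup : (l' ++ [f]).Nodup := hperm.nodup_iff.mpr S.nodup_toList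
  have hfS : f ∈ S := (hmem f).mp (by simp)
  have hf' : f ∉ l' := (List.nodup_cons.mp (List.nodup_append_comm.mp hnodup)).1
  have hl' : l'.toFinset = S.erase f := by
    rw [← S.toList_toFinset, ← List.toFinset_eq_of_perm _ _ hperm, List.toFinset_append]
    simp [hf']
  have key := weightOn_out_le_weightOn_second hA htot hw hfS [] l'
    (fun u hu => (hmem u).mp (by simp [hu])) (by simpa using hmed)
  rw [weightOn_eq_sum_filter _ (List.nodup_append.mp hnodup).1,
    weightOn_eq_sum_filter _ (List.nodup_append.mp hnodup).1, hl'] at key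
  refine ⟨f, hfS, ?_⟩
  convert key using 2
  · ext u
    simp only [outNbrsIn, mem_filter, mem_erase]
    exact ⟨fun h => ⟨⟨by rintro rfl; exact hA u u ⟨h.2, h.2⟩, h.1⟩, h.2⟩, fun h => ⟨h.1.2, h.2⟩⟩
  · ext u
    simp only [secondOutNbrsIn, mem_filter, mem_erase]
    tauto

end Tournament

lemma sum_ite_eq_succ_else_one (F : Finset V) (x : V) (k : ℕ) :
    ∑ u ∈ F, (if u = x then k + 1 else 1) = #F + if x ∈ F then k else 0 := by
  rw [← sum_ite_eq' F x fun _ => k, card_eq_sum_ones, ← sum_add_distrib]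
  refine sum_congr rfl fun u _ => ?_
  split_ifs <;> ring

section Core

variable [Fintype V] {A : V → V → Prop}

lemma snp_of_card_le (S : Finset V) {f : V}
    (h : #(outNbrsIn A S f) + (Nplus A f \ S).ncard ≤
      #(secondOutNbrsIn A S f) + (Npp A f \ S).ncard) :
    SNP A f := by
  have hout : Nplus A f ∩ S = outNbrsIn A S f := by
    ext u; simp [Nplus, outNbrsIn, and_comm]
  have hsec : (secondOutNbrsIn A S f : Set V) ⊆ Npp A f ∩ S := fun u hu => by
    obtain ⟨huS, hne, hfu, v, -, hfv, hvu⟩ := mem_filter.mp hu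
    exact ⟨⟨hne, hfu, v, hfv, hvu⟩, huS⟩
  have hsec_card := Set.ncard_le_ncard hsec
  rw [Set.ncard_coe_finset] at hsec_card
  unfold SNP
  rw [← Set.ncard_inter_add_ncard_sdiff_eq_ncard (Nplus A f) S,
    ← Set.ncard_inter_add_ncard_sdiff_eq_ncard (Npp A f) S, hout, Set.ncard_coe_finset]
  omega

lemma compl_subset_Npp_sdiff (hA : NoDigons A) {S : Finset V} {x f : V} (hf : f ∈ S)
    (hsplit : ∀ s ∈ S, s ≠ x → (A x s ∧ ∀ r ∉ S, A r s) ∨ (A s x ∧ ∀ r ∉ S, A s r))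
    (hRf : ∀ r ∉ S, A r f) (hx : x ∈ secondOutNbrsIn A S f) :
    ((Sᶜ : Finset V) : Set V) ⊆ Npp A f \ S := by
  obtain ⟨-, -, -, v, hv, hfv, hvx⟩ := mem_filter.mp hx
  -- the vertex through which `f` reaches `x` beats `x`, hence everything outside `S`
  have hvx' : v ≠ x := by rintro rfl; exact hA v v ⟨hvx, hvx⟩
  have hvR : ∀ r ∉ S, A v r :=
    ((hsplit v hv hvx').resolve_left fun h => hA x v ⟨h.1, hvx⟩).2
  intro r hr
  rw [coe_compl, Set.mem_compl_iff, mem_coe] at hr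
  exact ⟨⟨by rintro rfl; exact hr hf, fun hfr => hA r f ⟨hRf r hr, hfr⟩, v, hfv, hvR r hr⟩, hr⟩

theorem exists_snp_of_tournament_core (hA : NoDigons A) {S : Finset V} {x : V} (hx : x ∈ S)
    (htot : ∀ u ∈ S, ∀ v ∈ S, u ≠ v → A u v ∨ A v u)
    (hsplit : ∀ s ∈ S, s ≠ x → (A x s ∧ ∀ r ∉ S, A r s) ∨ (A s x ∧ ∀ r ∉ S, A s r))
    (hx_out : (Nplus A x \ S).ncard ≤ (Npp A x \ S).ncard) : ∃ v, SNP A v := by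
  -- weighting `x` by `1 + #Sᶜ` makes it stand for itself and the vertices outside `S`
  obtain ⟨f, hf, hfeed⟩ := exists_weighted_feed_vertex hA ⟨x, hx⟩ htot
    (w := fun u => if u = x then #Sᶜ + 1 else 1) fun u _ => by split_ifs <;> omega
  simp only [sum_ite_eq_succ_else_one] at hfeed
  refine ⟨f, snp_of_card_le S ?_⟩
  have hcompl : (Nplus A f \ S).ncard ≤ #Sᶜ := by
    rw [← Set.ncard_coe_finset, coe_compl]
    exact Set.ncard_le_ncard fun u hu => hu.2
  have hx₁ : x ∉ outNbrsIn A S f → x ∉ secondOutNbrsIn A S f →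
      #(outNbrsIn A S f) ≤ #(secondOutNbrsIn A S f) := fun h₁ h₂ => by
    simpa [h₁, h₂] using hfeed
  by_cases hfx : f = x
  · subst hfx
    refine add_le_add (hx₁ ?_ ?_) hx_out
    · exact fun h => hA f f ⟨(mem_filter.mp h).2, (mem_filter.mp h).2⟩
    · exact fun h => (mem_filter.mp h).2.1 rfl
  rcases hsplit f hf hfx with ⟨hxf, hRf⟩ | ⟨hfx', hfR⟩
  · have hout : x ∉ outNbrsIn A S f := fun h => hA x f ⟨hxf, (mem_filter.mp h).2⟩
    have hNplus : (Nplus A f \ S).ncard = 0 := by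
      rw [Set.ncard_eq_zero, Set.eq_empty_iff_forall_notMem]
      exact fun r hr => hA r f ⟨hRf r hr.2, hr.1⟩
    by_cases hsec : x ∈ secondOutNbrsIn A S f
    · have hR := Set.ncard_le_ncard (compl_subset_Npp_sdiff hA hf hsplit hRf hsec)
      rw [Set.ncard_coe_finset] at hR
      simp only [hout, hsec, if_false, if_true] at hfeed
      omega
    · have := hx₁ hout hsec
      omega
  · have hout : x ∈ outNbrsIn A S f := mem_filter.mpr ⟨hx, hfx'⟩
    have hsec : x ∉ secondOutNbrsIn A S f := fun h => (mem_filter.mp h).2.2.1 hfx'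
    simp only [hout, hsec, if_false, if_true] at hfeed
    omega

end Core

section Digraph

variable {A : V → V → Prop} {u v : V}

lemma MissingEdge.symm (h : MissingEdge A u v) : MissingEdge A v u :=
  ⟨h.1.symm, h.2.2, h.2.1⟩

lemma adj_of_not_missingEdge (hne : u ≠ v) (hm : ¬ MissingEdge A u v) (h : ¬ A v u) : A u v :=
  by_contra fun h' => hm ⟨hne, h', h⟩

lemma not_adj_of_notMem_Npp (h : v ∉ Npp A u) (hne : v ≠ u) (huv : ¬ A u v) {w : V}
    (huw : A u w) : ¬ A w v :=
  fun hwv => h ⟨hne, huv, w, huw, hwv⟩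

lemma LosesAt.swap {x₁ y₁ x₂ y₂ : V} (h : LosesAt A x₁ y₁ x₂ y₂) : LosesAt A y₁ x₁ y₂ x₂ :=
  ⟨h.2.2.2.1, h.2.2.2.2.1, h.2.2.2.2.2, h.1, h.2.1, h.2.2.1⟩

lemma exists_losesAt_of_edgeLoses_left {e : Sym2 V} (h : EdgeLoses A s(u, v) e) :
    ∃ c d, MissingEdge A c d ∧ LosesAt A u v c d := by
  obtain ⟨x₁, y₁, x₂, y₂, he, -, -, hm, hl⟩ := h
  rcases Sym2.eq_iff.mp he with ⟨rfl, rfl⟩ | ⟨rfl, rfl⟩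
  exacts [⟨x₂, y₂, hm, hl⟩, ⟨y₂, x₂, hm.symm, hl.swap⟩]

lemma exists_losesAt_of_edgeLoses_right {e : Sym2 V} (h : EdgeLoses A e s(u, v)) :
    ∃ c d, MissingEdge A c d ∧ LosesAt A c d u v := by
  obtain ⟨x₁, y₁, x₂, y₂, -, he, hm, -, hl⟩ := h
  rcases Sym2.eq_iff.mp he.symm with ⟨rfl, rfl⟩ | ⟨rfl, rfl⟩
  exacts [⟨x₁, y₁, hm, hl⟩, ⟨y₁, x₁, hm.symm, hl.swap⟩]

lemma LosesAt.ne_of_missingEdge_left (hA : NoDigons A) {z a c d : V} (hza : MissingEdge A z a)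
    (h : LosesAt A z a c d) : c ≠ z ∧ d ≠ z := by
  refine ⟨?_, ?_⟩ <;> rintro rfl
  exacts [hA c c ⟨h.1, h.1⟩, hza.2.2 h.2.2.2.1]

lemma LosesAt.ne_of_missingEdge_right (hA : NoDigons A) {z a c d : V} (hza : MissingEdge A z a)
    (h : LosesAt A c d z a) : c ≠ z ∧ d ≠ z := by
  refine ⟨?_, ?_⟩ <;> rintro rfl
  exacts [hA c c ⟨h.1, h.1⟩, hza.2.1 h.2.2.2.1]

end Digraph

def MissingEdgesMeet (A : V → V → Prop) (x y : V) : Prop :=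
  ∀ u v, MissingEdge A u v → u = x ∨ v = x ∨ u = y ∨ v = y

namespace MissingEdgesMeet

variable {A : V → V → Prop} {x y : V}

lemma symm (h : MissingEdgesMeet A x y) : MissingEdgesMeet A y x :=
  fun u v huv => by rcases h u v huv with h | h | h | h <;> simp [h]

lemma eq_or_eq_of_ne (h : MissingEdgesMeet A x y) {c d : V} (hcd : MissingEdge A c d)
    (hc : c ≠ x ∧ d ≠ x) : c = y ∨ d = y := by
  rcases h c d hcd with h | h | h | h
  exacts [absurd h hc.1, absurd h hc.2, Or.inl h, Or.inr h]

end MissingEdgesMeet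

namespace TwoStars

variable {A : V → V → Prop} {x y : V}

/-! In `Δ` a missing edge at one centre can only lose to, or be beaten by, a missing edge at the
other centre. -/

lemma xLeaf_outLoss (hA : NoDigons A) (hxy : A x y) (hM : MissingEdgesMeet A x y) {a : V}
    (ha : MissingEdge A x a) (hout : ∃ e, EdgeLoses A s(x, a) e) :
    ¬ A a y ∧ y ∉ Npp A a := by
  obtain ⟨e, he⟩ := hout
  obtain ⟨c, d, hcd, hl⟩ := exists_losesAt_of_edgeLoses_left he
  rcases hM.eq_or_eq_of_ne hcd (hl.ne_of_missingEdge_left hA ha) with rfl | rfl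
  exacts [⟨hl.2.2.2.2.1, hl.2.2.2.2.2⟩, absurd hxy hl.2.1]

lemma xLeaf_inLoss (hA : NoDigons A) (hxy : A x y) (hM : MissingEdgesMeet A x y) {a : V}
    (ha : MissingEdge A x a) (hin : ∃ e, EdgeLoses A e s(x, a)) :
    A y a ∧ x ∉ Npp A y ∧ ∃ c, MissingEdge A c y ∧ ¬ A c a ∧ a ∉ Npp A c := by
  obtain ⟨e, he⟩ := hin
  obtain ⟨c, d, hcd, hl⟩ := exists_losesAt_of_edgeLoses_right he
  rcases hM.eq_or_eq_of_ne hcd (hl.ne_of_missingEdge_right hA ha) with rfl | rfl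
  exacts [absurd ⟨hxy, hl.1⟩ (hA _ _), ⟨hl.2.2.2.1, hl.2.2.2.2.2, c, hcd, hl.2.1, hl.2.2.1⟩]

lemma yLeaf_outLoss (hA : NoDigons A) (hxy : A x y) (hM : MissingEdgesMeet A x y) {b : V}
    (hb : MissingEdge A y b) (hout : ∃ e, EdgeLoses A s(y, b) e) :
    ∃ c, MissingEdge A c x ∧ ¬ A b c ∧ c ∉ Npp A b := by
  obtain ⟨e, he⟩ := hout
  obtain ⟨c, d, hcd, hl⟩ := exists_losesAt_of_edgeLoses_left he
  rcases hM.symm.eq_or_eq_of_ne hcd (hl.ne_of_missingEdge_left hA hb) with rfl | rfl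
  exacts [absurd ⟨hxy, hl.1⟩ (hA _ _), ⟨c, hcd, hl.2.2.2.2.1, hl.2.2.2.2.2⟩]

lemma yLeaf_inLoss (hA : NoDigons A) (hxy : A x y) (hM : MissingEdgesMeet A x y) {b : V}
    (hb : MissingEdge A y b) (hin : ∃ e, EdgeLoses A e s(y, b)) :
    ¬ A x b ∧ b ∉ Npp A x := by
  obtain ⟨e, he⟩ := hin
  obtain ⟨c, d, hcd, hl⟩ := exists_losesAt_of_edgeLoses_right he
  rcases hM.symm.eq_or_eq_of_ne hcd (hl.ne_of_missingEdge_right hA hb) with rfl | rfl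
  exacts [⟨hl.2.1, hl.2.2.1⟩, absurd hxy hl.2.2.2.2.1]

end TwoStars

namespace TwoStars

variable [Fintype V] {A : V → V → Prop} {x y : V}

def core (A : V → V → Prop) (x y : V) : Finset V :=
  {u | u ≠ y ∧ ¬ MissingEdge A x u ∧ ¬ MissingEdge A y u}

lemma notMem_core {r : V} : r ∉ core A x y ↔ r = y ∨ MissingEdge A x r ∨ MissingEdge A y r := by
  simp only [core, mem_filter, mem_univ, true_and]
  tauto

lemma x_mem_core (hA : NoDigons A) (hxy : A x y) : x ∈ core A x y := by
  simp only [core, mem_filter, mem_univ, true_and]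
  exact ⟨by rintro rfl; exact hA x x ⟨hxy, hxy⟩, fun h => h.1 rfl, fun h => h.2.2 hxy⟩

lemma not_missingEdge_of_mem_core (hM : MissingEdgesMeet A x y) {s : V} (hs : s ∈ core A x y)
    (hsx : s ≠ x) (r : V) : ¬ MissingEdge A r s := by
  simp only [core, mem_filter, mem_univ, true_and] at hs
  intro hrs
  rcases hM r s hrs with rfl | rfl | rfl | rfl
  exacts [hs.2.1 hrs, hsx rfl, hs.2.2 hrs, hs.1 rfl]

lemma core_total (hM : MissingEdgesMeet A x y) :
    ∀ u ∈ core A x y, ∀ v ∈ core A x y, u ≠ v → A u v ∨ A v u := by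
  intro u hu v hv huv
  by_contra! h
  have huv' : MissingEdge A u v := ⟨huv, h.1, h.2⟩
  by_cases hux : u = x
  · subst hux
    simp only [core, mem_filter, mem_univ, true_and] at hv
    exact hv.2.1 huv'
  · exact not_missingEdge_of_mem_core hM hu hux v huv'.symm

lemma outside_core_adj_of_adj (hA : NoDigons A) (hxy : A x y) (hM : MissingEdgesMeet A x y)
    (hDisj : ∀ v, ¬ (MissingEdge A v x ∧ MissingEdge A v y))
    (hin : ∀ u v, MissingEdge A u v → ∃ e, EdgeLoses A e s(u, v))
    (hout : ∀ u v, MissingEdge A u v → ∃ e, EdgeLoses A s(u, v) e)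
    {a₀ : V} (ha₀ : MissingEdge A x a₀) {s : V} (hs : s ∈ core A x y) (hsx : s ≠ x)
    (hxs : A x s) : ∀ r ∉ core A x y, A r s := by
  have hm := not_missingEdge_of_mem_core hM hs hsx
  have hne : ∀ r ∉ core A x y, r ≠ s := fun r hr hrs => hr (hrs ▸ hs)
  have hyLeaf : ∀ b, MissingEdge A y b → A b s := fun b hb => by
    have ⟨hxb, hbx⟩ := yLeaf_inLoss hA hxy hM hb (hin y b hb)
    refine adj_of_not_missingEdge (hne b (notMem_core.mpr (.inr (.inr hb)))) (hm b) ?_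
    exact not_adj_of_notMem_Npp hbx (by rintro rfl; exact hb.2.2 hxy) hxb hxs
  have hxLeaf : ∀ a, MissingEdge A x a → A a s := fun a ha => by
    obtain ⟨-, -, c, hcy, hca, hac⟩ := xLeaf_inLoss hA hxy hM ha (hin x a ha)
    refine adj_of_not_missingEdge (hne a (notMem_core.mpr (.inr (.inl ha)))) (hm a) ?_
    exact not_adj_of_notMem_Npp hac (by rintro rfl; exact hDisj a ⟨ha.symm, hcy⟩) hca
      (hyLeaf c hcy.symm)
  intro r hr
  rcases notMem_core.mp hr with rfl | hr | hr
  · have ⟨ha₀r, hrN⟩ := xLeaf_outLoss hA hxy hM ha₀ (hout x a₀ ha₀)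
    refine adj_of_not_missingEdge (hne r hr) (hm r) ?_
    exact not_adj_of_notMem_Npp hrN (by rintro rfl; exact ha₀.2.1 hxy) ha₀r (hxLeaf a₀ ha₀)
  exacts [hxLeaf r hr, hyLeaf r hr]

lemma adj_outside_core_of_adj (hA : NoDigons A) (hxy : A x y) (hM : MissingEdgesMeet A x y)
    (hDisj : ∀ v, ¬ (MissingEdge A v x ∧ MissingEdge A v y))
    (hin : ∀ u v, MissingEdge A u v → ∃ e, EdgeLoses A e s(u, v))
    (hout : ∀ u v, MissingEdge A u v → ∃ e, EdgeLoses A s(u, v) e)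
    {a₀ : V} (ha₀ : MissingEdge A x a₀) {s : V} (hs : s ∈ core A x y) (hsx : s ≠ x)
    (hsx' : A s x) : ∀ r ∉ core A x y, A s r := by
  have hm := not_missingEdge_of_mem_core hM hs hsx
  have hne : ∀ r ∉ core A x y, s ≠ r := fun r hr hrs => hr (hrs ▸ hs)
  have hsy : A s y := by
    obtain ⟨-, hxN, -⟩ := xLeaf_inLoss hA hxy hM ha₀ (hin x a₀ ha₀)
    refine adj_of_not_missingEdge (hne y (notMem_core.mpr (.inl rfl))) (fun h => hm y h.symm) ?_
    exact fun hys => not_adj_of_notMem_Npp hxN (by rintro rfl; exact hA x x ⟨hxy, hxy⟩)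
      (fun h => hA x y ⟨hxy, h⟩) hys hsx'
  have hxLeaf : ∀ a, MissingEdge A x a → A s a := fun a ha => by
    have ⟨hay, hyN⟩ := xLeaf_outLoss hA hxy hM ha (hout x a ha)
    refine adj_of_not_missingEdge (hne a (notMem_core.mpr (.inr (.inl ha)))) (fun h => hm a h.symm) ?_
    exact fun has => not_adj_of_notMem_Npp hyN (by rintro rfl; exact ha.2.1 hxy) hay has hsy
  intro r hr
  rcases notMem_core.mp hr with rfl | hr | hr
  exacts [hsy, hxLeaf r hr, by
    obtain ⟨c, hcx, hrc, hcN⟩ := yLeaf_outLoss hA hxy hM hr (hout y r hr)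
    refine adj_of_not_missingEdge (hne r (notMem_core.mpr (.inr (.inr hr)))) (fun h => hm r h.symm) ?_
    exact fun hrs => not_adj_of_notMem_Npp hcN (by rintro rfl; exact hDisj c ⟨hcx, hr.symm⟩) hrc
      hrs (hxLeaf c hcx.symm)]

lemma ncard_Nplus_sdiff_core_le (hA : NoDigons A) (hxy : A x y) (hM : MissingEdgesMeet A x y)
    (hin : ∀ u v, MissingEdge A u v → ∃ e, EdgeLoses A e s(u, v))
    {a₀ : V} (ha₀ : MissingEdge A x a₀) :
    (Nplus A x \ core A x y).ncard ≤ (Npp A x \ core A x y).ncard := by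
  have hout : Nplus A x \ core A x y ⊆ {y} := by
    rintro r ⟨hxr, hr⟩
    rcases notMem_core.mp hr with rfl | hr | hr
    exacts [rfl, absurd hxr hr.2.1, absurd hxr (yLeaf_inLoss hA hxy hM hr (hin y r hr)).1]
  have ha₀N : a₀ ∈ Npp A x \ core A x y :=
    ⟨⟨ha₀.1.symm, ha₀.2.1, y, hxy, (xLeaf_inLoss hA hxy hM ha₀ (hin x a₀ ha₀)).1⟩,
      notMem_core.mpr (.inr (.inl ha₀))⟩
  calc (Nplus A x \ core A x y).ncard ≤ ({y} : Set V).ncard := Set.ncard_le_ncard hout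
    _ = 1 := Set.ncard_singleton y
    _ ≤ (Npp A x \ core A x y).ncard := (Set.ncard_pos).mpr ⟨a₀, ha₀N⟩

theorem exists_snp (hA : NoDigons A) (hxy : A x y) (hM : MissingEdgesMeet A x y)
    (hDisj : ∀ v, ¬ (MissingEdge A v x ∧ MissingEdge A v y)) (hxLeaf : ∃ a, MissingEdge A x a)
    (hin : ∀ u v, MissingEdge A u v → ∃ e, EdgeLoses A e s(u, v))
    (hout : ∀ u v, MissingEdge A u v → ∃ e, EdgeLoses A s(u, v) e) :
    ∃ v, SNP A v := by
  obtain ⟨a₀, ha₀⟩ := hxLeaf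
  refine exists_snp_of_tournament_core hA (x_mem_core hA hxy) (core_total hM) (fun s hs hsx => ?_)
    (ncard_Nplus_sdiff_core_le hA hxy hM hin ha₀)
  rcases (core_total hM) x (x_mem_core hA hxy) s hs hsx.symm with hxs | hsx'
  · exact .inl ⟨hxs, outside_core_adj_of_adj hA hxy hM hDisj hin hout ha₀ hs hsx hxs⟩
  · exact .inr ⟨hsx', adj_outside_core_of_adj hA hxy hM hDisj hin hout ha₀ hs hsx hsx'⟩

end TwoStars

end

theorem tournament_minus_two_stars_SNP_general [Fintype V]
    (A : V → V → Prop) (hA : NoDigons A)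
    (x y : V) (hadj : A x y ∨ A y x)
    -- the missing graph is the disjoint union of two stars with centers x and y:
    (hStar : ∀ u v, MissingEdge A u v → u = x ∨ v = x ∨ u = y ∨ v = y)
    (hDisj : ∀ v, ¬ (MissingEdge A v x ∧ MissingEdge A v y))
    (hxLeaf : ∃ a, MissingEdge A x a) (hyLeaf : ∃ b, MissingEdge A y b)
    -- δ(Δ) > 0:
    (hIndeg : ∀ u v, MissingEdge A u v → ∃ e : Sym2 V, EdgeLoses A e s(u, v))
    (hOutdeg : ∀ u v, MissingEdge A u v → ∃ e : Sym2 V, EdgeLoses A s(u, v) e) :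
    ∃ v : V, SNP A v := by
  rcases hadj with hxy | hyx
  · exact TwoStars.exists_snp hA hxy hStar hDisj hxLeaf hIndeg hOutdeg
  · exact TwoStars.exists_snp hA hyx (MissingEdgesMeet.symm hStar) (fun v hv => hDisj v hv.symm)
      hyLeaf hIndeg hOutdeg

/-- a digraph obtained from a tournament by deleting the edges of
two disjoint stars (centers `x`, `y`), in which every missing edge has positive
in-degree and positive out-degree in the dependency digraph, has a vertex with
the SNP. -/
theorem tournament_minus_two_stars_SNP [Fintype V]
    (A : V → V → Prop) (hA : NoDigons A)
    (x y : V) (hxy : x ≠ y) (hadj : A x y ∨ A y x)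
    -- the missing graph is the disjoint union of two stars with centers x and y:
    (hStar : ∀ u v, MissingEdge A u v → u = x ∨ v = x ∨ u = y ∨ v = y)
    (hDisj : ∀ v, ¬ (MissingEdge A v x ∧ MissingEdge A v y))
    (hxLeaf : ∃ a, MissingEdge A x a) (hyLeaf : ∃ b, MissingEdge A y b)
    -- δ(Δ) > 0:
    (hIndeg : ∀ u v, MissingEdge A u v → ∃ e : Sym2 V, EdgeLoses A e s(u, v))
    (hOutdeg : ∀ u v, MissingEdge A u v → ∃ e : Sym2 V, EdgeLoses A s(u, v) e) :
    ∃ v : V, SNP A v :=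
  tournament_minus_two_stars_SNP_general A hA x y hadj hStar hDisj hxLeaf hyLeaf hIndeg hOutdeg
end

section
/- Let D be a digraph obtained from a tournament by deleting the edges of three disjoint stars with centers x, y, z forming a directed triangle x→y→z→x. Then in the dependency digraph Δ of D, every arc goes from a missing edge of S_x to one of S_y, or from one of S_y to one of S_z, or from one of S_z to one of S_x. That is, xa cannot lose to zc, yb cannot lose to xa, and zc cannot lose to yb, for any leaves a∈A, b∈B, c∈C. -/
variable {V : Type*}

/-- Key lemma: if `p → q → r → p` is a directed triangle in a digon-free
digraph, then no missing edge at `p` can lose to a missing edge at `r`. -/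
theorem no_lose_of_triangle (A : V → V → Prop) (hA : NoDigons A)
    (p q r : V) (hpr : p ≠ r) (hpq : A p q) (hqr : A q r) (hrp : A r p)
    (a c : V) : ¬ EdgeLoses A s(p, a) s(r, c) := by
  rintro ⟨x₁, y₁, x₂, y₂, h1, h2, m1, m2, hL⟩
  rw [Sym2.eq_iff] at h1 h2
  have hnpr : ¬ A p r := fun h => hA p r ⟨h, hrp⟩
  have hin : r ∈ Npp A p := ⟨fun h => hpr h.symm, hnpr, q, hpq, hqr⟩
  obtain ⟨L1, L2, L3, L4, L5, L6⟩ := hL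
  rcases h1 with ⟨e1, e2⟩ | ⟨e1, e2⟩ <;> rcases h2 with ⟨f1, f2⟩ | ⟨f1, f2⟩ <;>
    subst e1 <;> subst e2 <;> subst f1 <;> subst f2
  · exact hnpr L1
  · exact L3 hin
  · exact L6 hin
  · exact hnpr L4

/-- for a digraph obtained from a tournament by deleting the
edges of three disjoint stars with centers `x, y, z` forming a directed
triangle `x → y → z → x`, the arcs of the dependency digraph only go from edges
of `S_x` to edges of `S_y`, from edges of `S_y` to edges of `S_z`, or from
edges of `S_z` to edges of `S_x`: `xa` cannot lose to `zc`, `yb` cannot lose to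
`xa`, and `zc` cannot lose to `yb`. -/
theorem three_stars_dependency_arcs [Fintype V]
    (A : V → V → Prop) (hA : NoDigons A)
    (x y z : V) (hxy : x ≠ y) (hyz : y ≠ z) (hxz : x ≠ z)
    (hXY : A x y) (hYZ : A y z) (hZX : A z x)
    -- the missing graph is the disjoint union of three stars with centers x, y, z:
    (hStar : ∀ u v, MissingEdge A u v → u = x ∨ v = x ∨ u = y ∨ v = y ∨ u = z ∨ v = z)
    (hDisjXY : ∀ v, ¬ (MissingEdge A v x ∧ MissingEdge A v y))
    (hDisjYZ : ∀ v, ¬ (MissingEdge A v y ∧ MissingEdge A v z))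
    (hDisjXZ : ∀ v, ¬ (MissingEdge A v x ∧ MissingEdge A v z)) :
    (∀ a c, MissingEdge A x a → MissingEdge A z c → ¬ EdgeLoses A s(x, a) s(z, c)) ∧
    (∀ b a, MissingEdge A y b → MissingEdge A x a → ¬ EdgeLoses A s(y, b) s(x, a)) ∧
    (∀ c b, MissingEdge A z c → MissingEdge A y b → ¬ EdgeLoses A s(z, c) s(y, b)) := by
  exact ⟨fun a c _ _ => no_lose_of_triangle A hA x y z hxz hXY hYZ hZX a c,
    fun b a _ _ => no_lose_of_triangle A hA y z x hxy.symm hYZ hZX hXY b a,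
    fun c b _ _ => no_lose_of_triangle A hA z x y hyz.symm hZX hXY hYZ c b⟩
end
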